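/- Let D be an integral domain with quotient field K. Then tilde(▲^{v_D}) = tilde(▲^{w_D}) = w_{D[X]}, where v_D is the v-operation of D, w_D := tilde(v_D), and w_{D[X]} is the w-operation of D[X]. -/

import Mathlib

/- Preliminaries: semistar operations on an integral domain `R` with quotient field `F`
(submodules of `F` over `R`), polynomial extension of semistar operations from `D`
to `D[X]` (viewed inside the quotient field `K(X) = RatFunc K` of `D[X]`). -/

open Polynomial Pointwise

set_option synthInstance.maxHeartbeats 1000000
set_option maxHeartbeats 1000000

open scoped Classical

noncomputable section

section Generic

variable (R F : Type*) [CommRing R] [Field F] [Algebra R F]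

/-- `o` is a semistar operation of `R` (on the nonzero `R`-submodules of the
quotient field `F`). -/
def IsSemistarOp (o : Submodule R F → Submodule R F) : Prop :=
  (∀ x : F, x ≠ 0 → ∀ E : Submodule R F, E ≠ ⊥ → o (x • E) = x • o E) ∧
  (∀ E G : Submodule R F, E ≠ ⊥ → G ≠ ⊥ → E ≤ G → o E ≤ o G) ∧
  (∀ E : Submodule R F, E ≠ ⊥ → E ≤ o E) ∧
  (∀ E : Submodule R F, E ≠ ⊥ → o (o E) = o E)

/-- The finite-type operation `⋆_f` associated to `⋆`:
`E^{⋆_f} = ⋃ { G^⋆ : G nonzero finitely generated, G ⊆ E }`. -/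
def finTypeFun (o : Submodule R F → Submodule R F) : Submodule R F → Submodule R F :=
  fun E => ⨆ (G : Submodule R F) (_ : G ≠ ⊥) (_ : G.FG) (_ : G ≤ E), o G

/-- `⋆` is of finite type, i.e. `⋆ = ⋆_f`. -/
def IsFiniteTypeFun (o : Submodule R F → Submodule R F) : Prop :=
  ∀ E : Submodule R F, E ≠ ⊥ → o E = finTypeFun R F o E

/-- `⋆` is stable: `(E ∩ G)^⋆ = E^⋆ ∩ G^⋆`. -/
def IsStableFun (o : Submodule R F → Submodule R F) : Prop :=
  ∀ E G : Submodule R F, E ≠ ⊥ → G ≠ ⊥ → o (E ⊓ G) = o E ⊓ o G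

/-- An ideal of `R` viewed as an `R`-submodule of `F`. -/
def idealSub (J : Ideal R) : Submodule R F := Submodule.map (Algebra.linearMap R F) J

/-- `(E : J) = { x ∈ F : xJ ⊆ E }` for an ideal `J` of `R`. -/
def colonIdeal (E : Submodule R F) (J : Ideal R) : Submodule R F where
  carrier := { x : F | ∀ a ∈ J, a • x ∈ E }
  add_mem' := fun {x y} hx hy a ha => by
    simpa [smul_add] using E.add_mem (hx a ha) (hy a ha)
  zero_mem' := fun a _ => by simpa using E.zero_mem
  smul_mem' := fun r x hx a ha => by
    rw [← mul_smul, mul_comm, mul_smul]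
    exact E.smul_mem r (hx a ha)

/-- The stable finite-type operation `tilde ⋆` associated to `⋆`:
`E^{tilde ⋆} = ⋃ { (E : J) : J nonzero finitely generated integral ideal with J^⋆ = R^⋆ }`. -/
def tildeFun (o : Submodule R F → Submodule R F) : Submodule R F → Submodule R F :=
  fun E => ⨆ (J : Ideal R) (_ : J ≠ ⊥) (_ : J.FG)
    (_ : o (idealSub R F J) = o (1 : Submodule R F)), colonIdeal R F E J

/-- The `v`-operation: `E^v = (R : (R : E))` for `E` a nonzero fractional ideal,
and `E^v = F` otherwise. -/
def vFun : Submodule R F → Submodule R F := fun E =>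
  if ∃ d : R, d ≠ 0 ∧ ∀ x ∈ E, d • x ∈ (1 : Submodule R F) then
    (1 : Submodule R F) / ((1 : Submodule R F) / E)
  else ⊤

/-- The `eab` operation `⋆_a` associated to `⋆`. -/
def aFun (o : Submodule R F → Submodule R F) : Submodule R F → Submodule R F := fun E =>
  ⨆ (G : Submodule R F) (_ : G ≠ ⊥) (_ : G.FG) (_ : G ≤ E),
    ⨆ (H : Submodule R F) (_ : H ≠ ⊥) (_ : H.FG), o (G * H) / o H

/-- `I` is a quasi-`⋆`-ideal: a nonzero integral ideal with `I^⋆ ∩ R = I`. -/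
def isQuasiIdealFun (o : Submodule R F → Submodule R F) (I : Ideal R) : Prop :=
  I ≠ ⊥ ∧ (o (idealSub R F I)).comap (Algebra.linearMap R F) = I

/-- `I` is a quasi-`⋆`-maximal ideal: maximal among proper quasi-`⋆`-ideals. -/
def isQuasiMaximalFun (o : Submodule R F → Submodule R F) (I : Ideal R) : Prop :=
  isQuasiIdealFun R F o I ∧ I ≠ ⊤ ∧
    ∀ J : Ideal R, isQuasiIdealFun R F o J → J ≠ ⊤ → I ≤ J → I = J

/-- The `v`-operation relative to an overring `R'` (an `R`-submodule of `F`):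
`B ↦ (R' : (R' : B))` for `B` a nonzero fractional ideal of `R'`, `F` otherwise. -/
def vRelFun (R' B : Submodule R F) : Submodule R F :=
  if ∃ z ∈ R', z ≠ 0 ∧ ∀ x ∈ B, z * x ∈ R' then R' / (R' / B) else ⊤

/-- The `t`-operation relative to an overring `R'`: finite-type operation associated to
the `v`-operation of `R'` (the union being over nonzero finitely generated
`R'`-submodules contained in `B`). -/
def tRelFun (R' B : Submodule R F) : Submodule R F :=
  ⨆ (G : Submodule R F) (_ : G ≠ ⊥)
    (_ : ∃ S : Finset F, G = R' * Submodule.span R (S : Set F)) (_ : G ≤ B),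
    vRelFun R F R' G

end Generic

section Poly

variable (D K : Type*) [CommRing D] [IsDomain D] [Field K] [Algebra D K] [IsFractionRing D K]

/-- The canonical ring homomorphism `D[X] → K(X)`. -/
def polyToRF : Polynomial D →+* RatFunc K :=
  (algebraMap (Polynomial K) (RatFunc K)).comp (Polynomial.mapRingHom (algebraMap D K))

/-- `K(X)` is an algebra over `D[X]`; in fact it is the quotient field of `D[X]`. -/
instance (priority := 100) : Algebra (Polynomial D) (RatFunc K) := (polyToRF D K).toAlgebra

/-- For a `D`-submodule `E` of `K`, the `D[X]`-submodule `E[X]` of `K(X)`: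
polynomials all of whose coefficients lie in `E`. -/
def polyExt (E : Submodule D K) : Submodule (Polynomial D) (RatFunc K) where
  carrier := { f : RatFunc K | ∃ p : Polynomial K, (∀ n, p.coeff n ∈ E) ∧
      f = algebraMap (Polynomial K) (RatFunc K) p }
  add_mem' := by
    rintro f g ⟨p, hp, rfl⟩ ⟨q, hq, rfl⟩
    exact ⟨p + q, fun n => by simpa using E.add_mem (hp n) (hq n), by simp⟩
  zero_mem' := ⟨0, fun n => by simpa using E.zero_mem, by simp⟩
  smul_mem' := by
    rintro c f ⟨p, hp, rfl⟩
    refine ⟨Polynomial.map (algebraMap D K) c * p, fun n => ?_, ?_⟩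
    · rw [Polynomial.coeff_mul]
      refine Submodule.sum_mem E fun ij _ => ?_
      rw [Polynomial.coeff_map, ← Algebra.smul_def]
      exact E.smul_mem _ (hp ij.2)
    · rw [Algebra.smul_def, RingHom.algebraMap_toAlgebra, map_mul]
      unfold polyToRF
      simp

/-- The contraction `B ∩ K` of a `D[X]`-submodule `B` of `K(X)` to a `D`-submodule of `K`. -/
def contractToBase (B : Submodule (Polynomial D) (RatFunc K)) : Submodule D K where
  carrier := { x : K | algebraMap K (RatFunc K) x ∈ B }
  add_mem' := fun {x y} hx hy => by
    simpa [Set.mem_setOf_eq, map_add] using B.add_mem hx hy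
  zero_mem' := by simpa using B.zero_mem
  smul_mem' := fun d x hx => by
    have h : algebraMap K (RatFunc K) (d • x)
        = (Polynomial.C d : Polynomial D) • (algebraMap K (RatFunc K) x) := by
      rw [Algebra.smul_def d x, map_mul, Algebra.smul_def, RingHom.algebraMap_toAlgebra]
      unfold polyToRF
      simp only [RingHom.coe_comp, Function.comp_apply, Polynomial.coe_mapRingHom,
        Polynomial.map_C, RatFunc.algebraMap_C, RatFunc.algebraMap_eq_C]
    show algebraMap K (RatFunc K) (d • x) ∈ B
    rw [h]
    exact B.smul_mem (Polynomial.C d) hx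

/-- The content `c_D(S)`: the `D`-submodule of `K` generated by the coefficients of all
polynomials belonging to `S`. -/
def contentOf (S : Set (RatFunc K)) : Submodule D K :=
  Submodule.span D { x : K | ∃ p : Polynomial K,
    algebraMap (Polynomial K) (RatFunc K) p ∈ S ∧ ∃ n, p.coeff n = x }

/-- The semistar operation `▲^⋆_T` of `D[X]` associated to a semistar operation `⋆` of `D`
and an overring `T` of `D`:
`A ↦ ⋂ { z⁻¹ (c_D(zA))^⋆[X] : z ∈ (T[X] : A), z ≠ 0 }` if `(T[X] : A) ≠ 0`, else `A ↦ K(X)`. -/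
def bigTriT (o : Submodule D K → Submodule D K) (T : Subalgebra D K) :
    Submodule (Polynomial D) (RatFunc K) → Submodule (Polynomial D) (RatFunc K) := fun A =>
  if ∃ z : RatFunc K, z ≠ 0 ∧ ∀ a ∈ A, z * a ∈ polyExt D K (Subalgebra.toSubmodule T) then
    ⨅ (z : RatFunc K) (_ : z ≠ 0) (_ : ∀ a ∈ A, z * a ∈ polyExt D K (Subalgebra.toSubmodule T)),
      z⁻¹ • polyExt D K (o (contentOf D K (z • (A : Set (RatFunc K)))))
  else ⊤

/-- `▲^⋆ := ▲^⋆_K`, the largest strict extension of `⋆` to `D[X]`. -/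
def bigTri (o : Submodule D K → Submodule D K) :
    Submodule (Polynomial D) (RatFunc K) → Submodule (Polynomial D) (RatFunc K) :=
  bigTriT D K o ⊤

/-- `b` is an extension of `⋆` to `D[X]` : `E^⋆ = (E[X])^b ∩ K`. -/
def IsExtensionFun (o : Submodule D K → Submodule D K)
    (b : Submodule (Polynomial D) (RatFunc K) → Submodule (Polynomial D) (RatFunc K)) : Prop :=
  ∀ E : Submodule D K, E ≠ ⊥ → o E = contractToBase D K (b (polyExt D K E))

/-- `b` is a strict extension of `⋆` to `D[X]` : `(E[X])^b = E^⋆[X]`. -/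
def IsStrictExtensionFun (o : Submodule D K → Submodule D K)
    (b : Submodule (Polynomial D) (RatFunc K) → Submodule (Polynomial D) (RatFunc K)) : Prop :=
  ∀ E : Submodule D K, E ≠ ⊥ → b (polyExt D K E) = polyExt D K (o E)

/-- `⋏^⋆ : A ↦ ⋂ { A^★ : ★ a semistar operation of D[X] extending ⋆ }`. -/
def curlyFun (o : Submodule D K → Submodule D K) :
    Submodule (Polynomial D) (RatFunc K) → Submodule (Polynomial D) (RatFunc K) := fun A =>
  ⨅ (b : Submodule (Polynomial D) (RatFunc K) → Submodule (Polynomial D) (RatFunc K))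
    (_ : IsSemistarOp (Polynomial D) (RatFunc K) b) (_ : IsExtensionFun D K o b), b A

/-- The localization `D_Q` of `D` at a prime ideal `Q`, as a `D`-submodule of `K`. -/
def locSub (Q : Ideal D) : Submodule D K :=
  Submodule.span D { x : K | ∃ s : D, s ∉ Q ∧ s • x ∈ (1 : Submodule D K) }

/-- The content of an ideal `I` of `D[X]`: the `D`-submodule of `K` generated by the
coefficients of the polynomials in `I`. -/
def contentOfIdeal (I : Ideal (Polynomial D)) : Submodule D K :=
  Submodule.span D { x : K | ∃ p ∈ I, ∃ n, algebraMap D K (Polynomial.coeff p n) = x }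

/-- The Nagata ring `D_Q(X)`, as a subset of `K(X)`: fractions `f/g` with
`f, g ∈ D_Q[X]` and the coefficients of `g` generating the unit ideal of `D_Q`. -/
def nagataSet (Q : Ideal D) : Set (RatFunc K) :=
  { u : RatFunc K | ∃ g : Polynomial K, (∀ n, g.coeff n ∈ locSub D K Q) ∧
      locSub D K Q * Submodule.span D { x : K | ∃ n, g.coeff n = x } = locSub D K Q ∧
      u * algebraMap (Polynomial K) (RatFunc K) g ∈ polyExt D K (locSub D K Q) }

end Poly

/-! Since `tilde ⋆` only sees which nonzero finitely generated ideals `J` satisfy `J^⋆ = D^⋆`,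
it suffices to show that for such an ideal `J` of `D[X]` each of `J^{▲^v} = D[X]^{▲^v}`,
`J^{▲^w} = D[X]^{▲^w}` and `J^v = D[X]^v` is equivalent to `(D[X] : J) = D[X]`.
Now `J^{▲^⋆} = D[X]^{▲^⋆}` says that every `z` with `zJ ⊆ K[X]` lies in `c(zJ)^⋆[X]`; applied to
`z ∈ (D[X] : J)` this forces `z ∈ D[X]`. Conversely, if `(D[X] : J) = D[X]`, clearing denominators
shows that such a `z` is a polynomial `Z`, and a Dedekind–Mertens type argument shows that the
coefficients of the generators of `J` lie in the radical of `(c(ZJ) : c(Z))`. So a power `I` of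
their content ideal carries the coefficients of `Z` into `c(ZJ)`, and `I^v = D` because
`(D : c(J)) ⊆ (D[X] : J) ∩ K = D`; hence `Z ∈ c(ZJ)^w[X]`. -/

section Colon

variable {R F : Type*} [CommRing R] [Field F] [Algebra R F]

theorem le_one_div_one_div (E : Submodule R F) : E ≤ 1 / (1 / E) :=
  fun x hx _ hy => mul_comm x _ ▸ hy x hx

theorem one_div_antitone : Antitone fun E : Submodule R F => 1 / E :=
  fun _ _ h _ hx y hy => hx y (h hy)

theorem one_div_one_eq_one : (1 : Submodule R F) / 1 = 1 :=
  le_antisymm (fun x hx => by simpa using hx 1 (Submodule.one_le.mp le_rfl))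
    (Submodule.one_le_one_div.mpr le_rfl)

theorem one_div_mul_le_one {E G : Submodule R F} (hE : 1 / E ≤ 1) (hG : 1 / G ≤ 1) :
    1 / (E * G) ≤ 1 :=
  fun x hx => hE fun e he => hG fun g hg => by
    simpa only [mul_assoc] using hx _ (Submodule.mul_mem_mul he hg)

theorem one_div_pow_le_one {E : Submodule R F} (hE : 1 / E ≤ 1) (n : ℕ) : 1 / E ^ n ≤ 1 := by
  induction n with
  | zero => simpa using one_div_one_eq_one.le
  | succ n ih => simpa only [pow_succ] using one_div_mul_le_one ih hE

theorem mem_one_div_span_iff {S : Set F} {x : F} :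
    x ∈ (1 : Submodule R F) / Submodule.span R S ↔ ∀ s ∈ S, x * s ∈ (1 : Submodule R F) := by
  rw [← Submodule.span_singleton_le_iff_mem, Submodule.le_div_iff_mul_le,
    Submodule.span_mul_span, Submodule.span_le, Set.singleton_mul, Set.image_subset_iff]
  rfl

theorem idealSub_le_one (J : Ideal R) : idealSub R F J ≤ 1 := by
  rintro _ ⟨a, -, rfl⟩
  exact Submodule.mem_one.mpr ⟨a, rfl⟩

theorem idealSub_span (S : Set R) :
    idealSub R F (Ideal.span S) = Submodule.span R (algebraMap R F '' S) :=
  Submodule.map_span _ _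

theorem idealSub_pow (J : Ideal R) (n : ℕ) : idealSub R F (J ^ n) = idealSub R F J ^ n :=
  Submodule.map_pow J (Algebra.ofId R F) n

theorem mem_one_div_idealSub_iff {J : Ideal R} {x : F} :
    x ∈ (1 : Submodule R F) / idealSub R F J ↔ ∀ a ∈ J, a • x ∈ (1 : Submodule R F) := by
  simp only [Submodule.mem_div_iff_forall_mul_mem, idealSub, Submodule.mem_map,
    Algebra.linearMap_apply, forall_exists_index, and_imp, forall_apply_eq_imp_iff₂,
    Algebra.smul_def, mul_comm]

variable [Nontrivial R]

theorem vFun_of_le_one {E : Submodule R F} (hE : E ≤ 1) : vFun R F E = 1 / (1 / E) :=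
  if_pos ⟨1, one_ne_zero, fun x hx => by simpa using hE hx⟩

theorem vFun_le_one {E : Submodule R F} (hE : E ≤ 1) : vFun R F E ≤ 1 := by
  rw [vFun_of_le_one hE]
  exact (one_div_antitone (Submodule.one_le_one_div.mpr hE)).trans one_div_one_eq_one.le

theorem vFun_eq_vFun_one_iff {E : Submodule R F} (hE : E ≤ 1) :
    vFun R F E = vFun R F 1 ↔ 1 / E ≤ 1 := by
  rw [vFun_of_le_one hE, vFun_of_le_one le_rfl, one_div_one_eq_one, one_div_one_eq_one]
  refine ⟨fun h => ?_, fun h => ?_⟩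
  · calc 1 / E ≤ 1 / (1 / (1 / E)) := le_one_div_one_div _
      _ = 1 := by rw [h, one_div_one_eq_one]
  · rw [le_antisymm h (Submodule.one_le_one_div.mpr hE), one_div_one_eq_one]

end Colon

section Tilde

variable {R F : Type*} [CommRing R] [Field F] [Algebra R F]

theorem tildeFun_le {o : Submodule R F → Submodule R F} {E T : Submodule R F}
    (h : ∀ J : Ideal R, J ≠ ⊥ → J.FG → o (idealSub R F J) = o 1 → colonIdeal R F E J ≤ T) :
    tildeFun R F o E ≤ T :=
  iSup₂_le fun J hJ => iSup₂_le fun hfg ho => h J hJ hfg ho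

theorem colonIdeal_le_tildeFun {o : Submodule R F → Submodule R F} {E : Submodule R F}
    {J : Ideal R} (hJ : J ≠ ⊥) (hfg : J.FG) (ho : o (idealSub R F J) = o 1) :
    colonIdeal R F E J ≤ tildeFun R F o E :=
  le_iSup₂_of_le J hJ (le_iSup₂_of_le hfg ho le_rfl)

theorem tildeFun_congr {o₁ o₂ : Submodule R F → Submodule R F}
    (h : ∀ J : Ideal R, J ≠ ⊥ → J.FG → (o₁ (idealSub R F J) = o₁ 1 ↔ o₂ (idealSub R F J) = o₂ 1))
    (E : Submodule R F) : tildeFun R F o₁ E = tildeFun R F o₂ E :=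
  le_antisymm
    (tildeFun_le fun J hJ hfg ho => colonIdeal_le_tildeFun hJ hfg ((h J hJ hfg).mp ho))
    (tildeFun_le fun J hJ hfg ho => colonIdeal_le_tildeFun hJ hfg ((h J hJ hfg).mpr ho))

theorem colonIdeal_le_one_div_one_div {E : Submodule R F} {J : Ideal R}
    (hJ : 1 / idealSub R F J ≤ 1) : colonIdeal R F E J ≤ 1 / (1 / E) := fun x hx y hy =>
  hJ <| mem_one_div_idealSub_iff.mpr fun a ha => by
    have := hy _ (hx a ha)
    rwa [Algebra.smul_def, mul_comm y, mul_assoc, ← Algebra.smul_def] at this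

variable [Nontrivial R]

theorem le_tildeFun (o : Submodule R F → Submodule R F) (E : Submodule R F) :
    E ≤ tildeFun R F o E := by
  have htop : idealSub R F (⊤ : Ideal R) = 1 := by
    simpa [idealSub] using (Submodule.one_eq_range (R := R) (A := F)).symm
  have hE : E ≤ colonIdeal R F E ⊤ := fun x hx a _ => E.smul_mem a hx
  exact hE.trans (colonIdeal_le_tildeFun top_ne_bot ⟨{1}, by simp⟩ (congrArg o htop))

theorem tildeFun_vFun_le_vFun (E : Submodule R F) : tildeFun R F (vFun R F) E ≤ vFun R F E := by
  by_cases hE : ∃ d : R, d ≠ 0 ∧ ∀ x ∈ E, d • x ∈ (1 : Submodule R F)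
  · rw [vFun, if_pos hE]
    exact tildeFun_le fun J _ _ hJ =>
      colonIdeal_le_one_div_one_div ((vFun_eq_vFun_one_iff (idealSub_le_one J)).mp hJ)
  · rw [vFun, if_neg hE]
    exact le_top

end Tilde

section PolyExt

variable {D K : Type*} [CommRing D] [Field K] [Algebra D K]

theorem algebraMap_polynomial_apply (q : D[X]) :
    algebraMap D[X] (RatFunc K) q = algebraMap K[X] (RatFunc K) (q.map (algebraMap D K)) := rfl

theorem algebraMap_mem_one_iff_coeff_mem {p : K[X]} :
    algebraMap K[X] (RatFunc K) p ∈ (1 : Submodule D[X] (RatFunc K)) ↔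
      ∀ n, p.coeff n ∈ (1 : Submodule D K) := by
  simp only [Submodule.mem_one, algebraMap_polynomial_apply,
    (RatFunc.algebraMap_injective K).eq_iff, ← Polynomial.mem_lifts, lifts_iff_coeff_lifts,
    Set.mem_range]

theorem algebraMap_mem_one_iff {x : K} :
    algebraMap K (RatFunc K) x ∈ (1 : Submodule D[X] (RatFunc K)) ↔ x ∈ (1 : Submodule D K) := by
  rw [RatFunc.algebraMap_eq_C, ← RatFunc.algebraMap_C, algebraMap_mem_one_iff_coeff_mem]
  refine ⟨fun h => by simpa using h 0, fun h n => ?_⟩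
  rw [coeff_C]
  split_ifs
  exacts [h, zero_mem _]

theorem algebraMap_mem_polyExt_iff {E : Submodule D K} {p : K[X]} :
    algebraMap K[X] (RatFunc K) p ∈ polyExt D K E ↔ ∀ n, p.coeff n ∈ E :=
  ⟨fun ⟨_, hq, hpq⟩ => RatFunc.algebraMap_injective K hpq ▸ hq, fun h => ⟨p, h, rfl⟩⟩

theorem polyExt_mono {E E' : Submodule D K} (h : E ≤ E') : polyExt D K E ≤ polyExt D K E' :=
  fun _ ⟨p, hp, hf⟩ => ⟨p, fun n => h (hp n), hf⟩

theorem polyExt_one : polyExt D K 1 = (1 : Submodule D[X] (RatFunc K)) := by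
  ext f
  refine ⟨fun ⟨p, hp, hf⟩ => hf ▸ algebraMap_mem_one_iff_coeff_mem.mpr hp, fun hf => ?_⟩
  obtain ⟨q, rfl⟩ := Submodule.mem_one.mp hf
  exact ⟨_, algebraMap_mem_one_iff_coeff_mem.mp hf, rfl⟩

theorem one_le_polyExt_top :
    (1 : Submodule D[X] (RatFunc K)) ≤ polyExt D K (Subalgebra.toSubmodule ⊤) :=
  polyExt_one (D := D) (K := K) ▸ polyExt_mono le_top

theorem coeff_mem_contentOf {S : Set (RatFunc K)} {p : K[X]}
    (h : algebraMap K[X] (RatFunc K) p ∈ S) (n : ℕ) : p.coeff n ∈ contentOf D K S :=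
  Submodule.subset_span ⟨p, h, n, rfl⟩

theorem contentOf_le_one {S : Set (RatFunc K)} (h : S ⊆ (1 : Submodule D[X] (RatFunc K))) :
    contentOf D K S ≤ 1 := by
  rw [contentOf, Submodule.span_le]
  rintro _ ⟨p, hp, n, rfl⟩
  exact algebraMap_mem_one_iff_coeff_mem.mp (h hp) n

end PolyExt

section BigTri

variable {D K : Type*} [CommRing D] [Field K] [Algebra D K]
  {o o' : Submodule D K → Submodule D K} {A : Submodule D[X] (RatFunc K)}

theorem bigTri_mono (h : ∀ E, o E ≤ o' E) :
    bigTri D K o A ≤ bigTri D K o' A := by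
  unfold bigTri bigTriT
  split_ifs
  · exact iInf₂_mono fun z _ => iInf_mono fun _ => smul_le_smul_left _ (polyExt_mono (h _))
  · exact le_rfl

theorem bigTri_of_le_one (hA : A ≤ 1) :
    bigTri D K o A = ⨅ (z : RatFunc K) (_ : z ≠ 0)
      (_ : ∀ a ∈ A, z * a ∈ polyExt D K (Subalgebra.toSubmodule ⊤)),
        z⁻¹ • polyExt D K (o (contentOf D K (z • (A : Set (RatFunc K))))) :=
  if_pos ⟨1, one_ne_zero, fun a ha => by simpa using one_le_polyExt_top (hA ha)⟩

theorem one_mem_bigTri_iff (hA : A ≤ 1) :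
    1 ∈ bigTri D K o A ↔ ∀ z : RatFunc K, z ≠ 0 →
      (∀ a ∈ A, z * a ∈ polyExt D K (Subalgebra.toSubmodule ⊤)) →
        z ∈ polyExt D K (o (contentOf D K (z • (A : Set (RatFunc K))))) := by
  simp only [bigTri_of_le_one hA, Submodule.mem_iInf]
  refine forall₂_congr fun z hz => forall_congr' fun _ => ?_
  rw [Submodule.mem_smul_iff_inv_mul_mem (inv_ne_zero hz), inv_inv, mul_one]

theorem bigTri_le_one (ho : ∀ E : Submodule D K, E ≤ 1 → o E ≤ 1) (hA : A ≤ 1) :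
    bigTri D K o A ≤ 1 := by
  rw [bigTri_of_le_one hA]
  refine (iInf₂_le 1 one_ne_zero).trans ((iInf_le _ fun a ha => ?_).trans ?_)
  · simpa using one_le_polyExt_top (hA ha)
  · rw [inv_one, one_smul, one_smul, ← polyExt_one]
    exact polyExt_mono (ho _ (contentOf_le_one hA))

theorem bigTri_eq_one_iff (ho : ∀ E : Submodule D K, E ≤ 1 → o E ≤ 1) (hA : A ≤ 1) :
    bigTri D K o A = 1 ↔ 1 ∈ bigTri D K o A :=
  ⟨fun h => h ▸ Submodule.one_le.mp le_rfl,
    fun h => le_antisymm (bigTri_le_one ho hA) (Submodule.one_le.mpr h)⟩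

theorem one_mem_bigTri_one (ho : ∀ E, E ≤ o E) : 1 ∈ bigTri D K o 1 := by
  refine (one_mem_bigTri_iff le_rfl).mpr fun z _ hz => ?_
  obtain ⟨Z, -, rfl⟩ := mul_one z ▸ hz 1 (Submodule.one_le.mp le_rfl)
  refine algebraMap_mem_polyExt_iff.mpr fun n => ho _ (coeff_mem_contentOf ?_ n)
  simpa using Set.smul_mem_smul_set (a := algebraMap K[X] (RatFunc K) Z)
    (Submodule.one_le.mp (le_refl (1 : Submodule D[X] (RatFunc K))))

theorem bigTri_eq_bigTri_one_iff (ho : ∀ E : Submodule D K, E ≤ 1 → o E ≤ 1)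
    (ho' : ∀ E, E ≤ o E) (hA : A ≤ 1) :
    bigTri D K o A = bigTri D K o 1 ↔ 1 ∈ bigTri D K o A := by
  rw [(bigTri_eq_one_iff ho le_rfl).mpr (one_mem_bigTri_one ho'), bigTri_eq_one_iff ho hA]

theorem one_div_le_one_of_one_mem_bigTri (ho : ∀ E : Submodule D K, E ≤ 1 → o E ≤ 1)
    (hA : A ≤ 1) (h : 1 ∈ bigTri D K o A) : 1 / A ≤ 1 := by
  intro u hu
  rcases eq_or_ne u 0 with rfl | hu0
  · exact zero_mem _
  have hc : contentOf D K (u • (A : Set (RatFunc K))) ≤ 1 :=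
    contentOf_le_one (by rintro _ ⟨a, ha, rfl⟩; exact hu a ha)
  rw [← polyExt_one]
  exact polyExt_mono (ho _ hc)
    ((one_mem_bigTri_iff hA).mp h u hu0 fun a ha => one_le_polyExt_top (hu a ha))

end BigTri

section CoeffColon

open Finset.HasAntidiagonal

variable {D K : Type*} [CommRing D] [Field K] [Algebra D K]
  {W : Submodule D K} {f : D[X]} {g : K[X]}

theorem mem_colon_range_coeff {a : D} :
    a ∈ W.colon (Set.range g.coeff) ↔ ∀ i, a • g.coeff i ∈ W :=
  Submodule.mem_colon.trans Set.forall_mem_range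

theorem coeff_mul_map_eq_sum (t : ℕ) :
    (g * f.map (algebraMap D K)).coeff t =
      ∑ x ∈ antidiagonal t, f.coeff x.2 • g.coeff x.1 := by
  simp [coeff_mul, Algebra.smul_def, mul_comm]

theorem coeff_pow_mem_colon {n : ℕ} (hfg : ∀ t, (g * f.map (algebraMap D K)).coeff t ∈ W)
    (hhigh : ∀ k > n, ∀ i, f.coeff k • g.coeff i ∈ W) :
    f.coeff n ^ (g.natDegree + 1) ∈ W.colon (Set.range g.coeff) := by
  suffices h : ∀ s i, g.natDegree + 1 ≤ i + s → f.coeff n ^ s • g.coeff i ∈ W from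
    mem_colon_range_coeff.mpr fun i => h _ i (by omega)
  intro s
  induction s with
  | zero =>
    intro i hi
    simp [coeff_eq_zero_of_natDegree_lt (show g.natDegree < i by omega)]
  | succ s ih =>
    intro i hi
    -- In `f_n ^ s •` (coefficient `i + n` of `g f`) every term but `f_n ^ (s + 1) • g_i`
    -- involves some `f_k` with `k > n` or some `g_u` with `u > i`.
    have hsum := W.smul_mem (f.coeff n ^ s) (hfg (i + n))
    have hin : (i, n) ∈ antidiagonal (i + n) := mem_antidiagonal.mpr rfl
    rw [coeff_mul_map_eq_sum, Finset.smul_sum, ← Finset.add_sum_erase _ _ hin, smul_smul,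
      ← pow_succ] at hsum
    refine (W.add_mem_iff_left (Submodule.sum_mem _ fun x hx => ?_)).mp hsum
    obtain ⟨hne, hx⟩ := Finset.mem_erase.mp hx
    rw [mem_antidiagonal] at hx
    rcases lt_or_ge n x.2 with hlt | hle
    · exact W.smul_mem _ (hhigh _ hlt _)
    · have hx1 : i < x.1 := by
        by_contra! h
        exact hne (Prod.ext (by omega) (by omega))
      rw [smul_comm]
      exact W.smul_mem _ (ih _ (by omega))

theorem exists_coeff_pow_mem_colon {H : Ideal D} {n N : ℕ} (hH : ∀ k > n, f.coeff k ∈ H)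
    (hfg : ∀ t, (g * f.map (algebraMap D K)).coeff t ∈ W)
    (hN : H ^ N ≤ W.colon (Set.range g.coeff)) :
    ∃ α, f.coeff n ^ α ∈ W.colon (Set.range g.coeff) := by
  induction N generalizing W with
  | zero => exact ⟨0, hN (by simp)⟩
  | succ N ih =>
    -- Pass to `W' = (W : H)`, which absorbs one factor `H` of `H ^ (N + 1)`.
    obtain ⟨α, hα⟩ := ih (W := colonIdeal D K W H) (fun t a _ => W.smul_mem a (hfg t))
      fun a ha => mem_colon_range_coeff.mpr fun i b hb => by
        rw [smul_smul]
        exact mem_colon_range_coeff.mp (hN (pow_succ' H N ▸ Ideal.mul_mem_mul hb ha)) i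
    have key := coeff_pow_mem_colon (W := W) (g := f.coeff n ^ α • g) (n := n)
      (fun t => by rw [smul_mul_assoc, coeff_smul]; exact W.smul_mem _ (hfg t))
      (fun k hk i => by rw [coeff_smul]; exact mem_colon_range_coeff.mp hα i _ (hH k hk))
    refine ⟨(f.coeff n ^ α • g).natDegree + 1 + α, mem_colon_range_coeff.mpr fun i => ?_⟩
    rw [pow_add, mul_smul, ← coeff_smul]
    exact mem_colon_range_coeff.mp key i

theorem coeff_mem_radical_colon (hfg : ∀ t, (g * f.map (algebraMap D K)).coeff t ∈ W) (n : ℕ) :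
    f.coeff n ∈ (W.colon (Set.range g.coeff)).radical := by
  by_cases hn : f.natDegree < n
  · rw [coeff_eq_zero_of_natDegree_lt hn]
    exact zero_mem _
  set H := Ideal.span ((Finset.Ioc n f.natDegree).image f.coeff : Set D)
  have hH : ∀ k > n, f.coeff k ∈ H := fun k hk => by
    by_cases hk' : k ≤ f.natDegree
    · exact Ideal.subset_span (Finset.mem_coe.mpr
        (Finset.mem_image_of_mem _ (Finset.mem_Ioc.mpr ⟨hk, hk'⟩)))
    · rw [coeff_eq_zero_of_natDegree_lt (not_le.mp hk')]
      exact zero_mem _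
  have hHrad : H ≤ (W.colon (Set.range g.coeff)).radical := by
    refine Ideal.span_le.mpr fun _ hx => ?_
    obtain ⟨k, hk, rfl⟩ := Finset.mem_image.mp (Finset.mem_coe.mp hx)
    have hnk := (Finset.mem_Ioc.mp hk).1
    exact coeff_mem_radical_colon hfg k
  obtain ⟨N, hN⟩ := Ideal.exists_pow_le_of_le_radical_of_fg hHrad ⟨_, rfl⟩
  exact exists_coeff_pow_mem_colon hH hfg hN
termination_by f.natDegree + 1 - n
decreasing_by all_goals omega

theorem span_coeffs_le_radical_colon {S : Finset D[X]}
    (hS : ∀ p ∈ S, ∀ t, (g * p.map (algebraMap D K)).coeff t ∈ W) :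
    Ideal.span ↑(S.biUnion coeffs) ≤ (W.colon (Set.range g.coeff)).radical := by
  refine Ideal.span_le.mpr fun c hc => ?_
  obtain ⟨p, hp, hc⟩ := Finset.mem_biUnion.mp hc
  obtain ⟨n, -, rfl⟩ := mem_coeffs_iff.mp hc
  exact coeff_mem_radical_colon (hS p hp) n

end CoeffColon

section Denominators

variable {D K : Type*} [CommRing D] [Field K] [Algebra D K] [IsFractionRing D K]

theorem exists_smul_coeff_mem_one (T : Finset K[X]) :
    ∃ b ∈ nonZeroDivisors D, ∀ q ∈ T, ∀ n, b • q.coeff n ∈ (1 : Submodule D K) := by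
  obtain ⟨b, hb⟩ :=
    IsLocalization.exist_integer_multiples_of_finset (nonZeroDivisors D) (T.biUnion coeffs)
  refine ⟨b, b.2, fun q hq n => ?_⟩
  by_cases hn : q.coeff n = 0
  · rw [hn, smul_zero]
    exact zero_mem _
  · exact Submodule.mem_one.mpr
      (hb _ (Finset.mem_biUnion.mpr ⟨q, hq, coeff_mem_coeffs hn⟩))

theorem exists_eq_algebraMap_of_mul_mem_polyExt_top {S : Finset D[X]}
    (hC : 1 / idealSub D[X] (RatFunc K) (Ideal.span ↑S) ≤ 1) {z : RatFunc K}
    (hz : ∀ a ∈ idealSub D[X] (RatFunc K) (Ideal.span ↑S),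
      z * a ∈ polyExt D K (Subalgebra.toSubmodule ⊤)) :
    ∃ Z : K[X], z = algebraMap K[X] (RatFunc K) Z := by
  have hnum : ∀ p ∈ S, z * algebraMap D[X] (RatFunc K) p =
      algebraMap K[X] (RatFunc K) (z * algebraMap D[X] (RatFunc K) p).num := fun p hp => by
    obtain ⟨q, -, hq⟩ := hz _ (Submodule.mem_map_of_mem (Ideal.subset_span hp))
    rw [Algebra.linearMap_apply] at hq
    rw [hq, RatFunc.num_algebraMap]
  obtain ⟨b, hb, hbT⟩ :=
    exists_smul_coeff_mem_one (D := D) (S.image fun p => (z * algebraMap D[X] (RatFunc K) p).num)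
  have hb0 : algebraMap D K b ≠ 0 := (IsLocalization.map_units K ⟨b, hb⟩).ne_zero
  have hbz : algebraMap K[X] (RatFunc K) (C (algebraMap D K b)) * z ∈
      (1 : Submodule D[X] (RatFunc K)) := by
    refine hC ?_
    rw [idealSub_span, mem_one_div_span_iff]
    rintro _ ⟨p, hp, rfl⟩
    rw [mul_assoc, hnum p hp, ← map_mul, algebraMap_mem_one_iff_coeff_mem]
    intro n
    rw [coeff_C_mul, ← Algebra.smul_def]
    exact hbT _ (Finset.mem_image_of_mem _ hp) n
  obtain ⟨q, hq⟩ := Submodule.mem_one.mp hbz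
  refine ⟨C (algebraMap D K b)⁻¹ * q.map (algebraMap D K), ?_⟩
  rw [map_mul, ← algebraMap_polynomial_apply, hq, ← mul_assoc, ← map_mul, ← C_mul,
    inv_mul_cancel₀ hb0, C_1, map_one, one_mul]

end Denominators

section TildeV

variable {D K : Type*} [CommRing D] [Field K] [Algebra D K]

theorem one_div_idealSub_span_coeffs_le_one {S : Finset D[X]}
    (hC : 1 / idealSub D[X] (RatFunc K) (Ideal.span ↑S) ≤ 1) :
    1 / idealSub D K (Ideal.span ↑(S.biUnion coeffs)) ≤ 1 := by
  intro x hx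
  rw [idealSub_span, mem_one_div_span_iff] at hx
  refine algebraMap_mem_one_iff.mp (hC ?_)
  rw [idealSub_span, mem_one_div_span_iff]
  rintro _ ⟨p, hp, rfl⟩
  rw [RatFunc.algebraMap_eq_C, ← RatFunc.algebraMap_C, algebraMap_polynomial_apply, ← map_mul,
    algebraMap_mem_one_iff_coeff_mem]
  intro n
  rw [coeff_C_mul, coeff_map]
  by_cases hn : p.coeff n = 0
  · rw [hn, map_zero, mul_zero]
    exact zero_mem _
  · exact hx _ ⟨_, Finset.mem_biUnion.mpr ⟨p, hp, coeff_mem_coeffs hn⟩, rfl⟩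

theorem span_coeffs_ne_bot {S : Finset D[X]} (hS : Ideal.span (S : Set D[X]) ≠ ⊥) :
    Ideal.span (↑(S.biUnion coeffs) : Set D) ≠ ⊥ := by
  obtain ⟨p, hp, hp0⟩ : ∃ p ∈ S, p ≠ 0 := by
    by_contra! h
    exact hS (Ideal.span_eq_bot.mpr h)
  have hc : p.leadingCoeff ≠ 0 := leadingCoeff_ne_zero.mpr hp0
  exact (Submodule.ne_bot_iff _).mpr ⟨_, Ideal.subset_span
    (Finset.mem_biUnion.mpr ⟨p, hp, coeff_mem_coeffs hc⟩), hc⟩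

variable [IsDomain D] [IsFractionRing D K]

theorem one_mem_bigTri_tildeFun_vFun {J : Ideal D[X]} (hJ : J ≠ ⊥) (hfg : J.FG)
    (hC : 1 / idealSub D[X] (RatFunc K) J ≤ 1) :
    1 ∈ bigTri D K (tildeFun D K (vFun D K)) (idealSub D[X] (RatFunc K) J) := by
  obtain ⟨S, rfl⟩ := hfg
  refine (one_mem_bigTri_iff (idealSub_le_one _)).mpr fun z _ hz => ?_
  obtain ⟨Z, rfl⟩ := exists_eq_algebraMap_of_mul_mem_polyExt_top hC hz
  set W := contentOf D K
    (algebraMap K[X] (RatFunc K) Z • (idealSub D[X] (RatFunc K) (Ideal.span ↑S) : Set (RatFunc K)))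
  have hW : ∀ p ∈ S, ∀ t, (Z * p.map (algebraMap D K)).coeff t ∈ W := fun p hp =>
    coeff_mem_contentOf <| by
      rw [map_mul, ← algebraMap_polynomial_apply]
      exact Set.smul_mem_smul_set (Submodule.mem_map_of_mem (Ideal.subset_span hp))
  set I := Ideal.span (↑(S.biUnion coeffs) : Set D)
  obtain ⟨M, hM⟩ :=
    Ideal.exists_pow_le_of_le_radical_of_fg (span_coeffs_le_radical_colon hW) ⟨_, rfl⟩
  have hIv : vFun D K (idealSub D K (I ^ M)) = vFun D K 1 := by
    rw [vFun_eq_vFun_one_iff (idealSub_le_one _), idealSub_pow]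
    exact one_div_pow_le_one (one_div_idealSub_span_coeffs_le_one hC) M
  refine algebraMap_mem_polyExt_iff.mpr fun n => colonIdeal_le_tildeFun
    (pow_ne_zero M (span_coeffs_ne_bot hJ)) (Submodule.FG.pow ⟨_, rfl⟩ M) hIv ?_
  exact fun a ha => mem_colon_range_coeff.mp (hM ha) n

theorem bigTri_idealSub_eq_bigTri_one_iff {o : Submodule D K → Submodule D K}
    (ho : ∀ E : Submodule D K, E ≤ 1 → o E ≤ 1) (hwo : ∀ E, tildeFun D K (vFun D K) E ≤ o E)
    (J : Ideal D[X]) (hJ : J ≠ ⊥) (hfg : J.FG) :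
    bigTri D K o (idealSub D[X] (RatFunc K) J) = bigTri D K o 1 ↔
      1 / idealSub D[X] (RatFunc K) J ≤ 1 := by
  rw [bigTri_eq_bigTri_one_iff ho (fun E => (le_tildeFun _ E).trans (hwo E)) (idealSub_le_one J)]
  exact ⟨one_div_le_one_of_one_mem_bigTri ho (idealSub_le_one J),
    fun hC => bigTri_mono hwo (one_mem_bigTri_tildeFun_vFun hJ hfg hC)⟩

end TildeV

theorem tilde_bigTri_v_eq_w (D K : Type*) [CommRing D] [IsDomain D] [Field K] [Algebra D K] [IsFractionRing D K] :
    ∀ A : Submodule (Polynomial D) (RatFunc K), A ≠ ⊥ →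
      tildeFun (Polynomial D) (RatFunc K) (bigTri D K (vFun D K)) A =
        tildeFun (Polynomial D) (RatFunc K) (bigTri D K (tildeFun D K (vFun D K))) A ∧
      tildeFun (Polynomial D) (RatFunc K) (bigTri D K (vFun D K)) A =
        tildeFun (Polynomial D) (RatFunc K) (vFun (Polynomial D) (RatFunc K)) A := by
  intro A _
  have hv := bigTri_idealSub_eq_bigTri_one_iff (D := D) (K := K) (fun _ => vFun_le_one)
    tildeFun_vFun_le_vFun
  have hw := bigTri_idealSub_eq_bigTri_one_iff (D := D) (K := K)
    (fun E hE => (tildeFun_vFun_le_vFun E).trans (vFun_le_one hE)) fun _ => le_rfl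
  refine ⟨tildeFun_congr (fun J hJ hfg => ?_) A, tildeFun_congr (fun J hJ hfg => ?_) A⟩
  · rw [hv J hJ hfg, hw J hJ hfg]
  · rw [hv J hJ hfg, vFun_eq_vFun_one_iff (idealSub_le_one J)]
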